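/- arXiv:2201.08847 — 2 statements merged into one kernel-verified Lean document; each statement's English description precedes it below -/
import Mathlib

section
/- For every rational number k, (30*k^2 - 2*k - 31)^2 + (-31*k^2 - 60*k + 1)^2 + (-k^2 - 62*k - 30)^2 + (36^2 + 7^2 + 17^2)*(k^2 + k + 1)^2 = (3^2 + 4^2 + 19^2 + 27^2 + 34^2 + 35^2)*(k^2 + k + 1)^2. -/
theorem stmt2 (k : ℚ) :
    (30*k^2 - 2*k - 31)^2 + (-31*k^2 - 60*k + 1)^2 + (-k^2 - 62*k - 30)^2 +
      (36^2 + 7^2 + 17^2)*(k^2 + k + 1)^2 =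
    (3^2 + 4^2 + 19^2 + 27^2 + 34^2 + 35^2)*(k^2 + k + 1)^2 := by ring
end

section
/- Let a, b, c, d, p, q be rationals with (4*q^2 - p^2)*b^2 + (4*p^2 - q^2)*a^2 = 15*c^2 and (4*p^2 - q^2)*b^2 + (4*q^2 - p^2)*a^2 = 15*d^2. Then for each k ∈ {1, 3, 5, 7}: (-c+d+a*p-b*q)^k + (-c+d-a*p+b*q)^k + (-2*c-b*p-a*q)^k + (-2*c+b*p+a*q)^k + (-c-d-a*p+b*q)^k + (-c-d+a*p-b*q)^k = (-c+d+a*p+b*q)^k + (-c+d-a*p-b*q)^k + (-2*c-b*p+a*q)^k + (-2*c+b*p-a*q)^k + (-c-d-a*p-b*q)^k + (-c-d+a*p+b*q)^k. -/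
theorem stmt19 (a b c d p q : ℚ)
    (h1 : (4*q^2 - p^2)*b^2 + (4*p^2 - q^2)*a^2 = 15*c^2)
    (h2 : (4*p^2 - q^2)*b^2 + (4*q^2 - p^2)*a^2 = 15*d^2) :
    ∀ k ∈ ({1, 3, 5, 7} : Set ℕ),
    (-c+d+a*p-b*q)^k + (-c+d-a*p+b*q)^k + (-2*c-b*p-a*q)^k + (-2*c+b*p+a*q)^k +
      (-c-d-a*p+b*q)^k + (-c-d+a*p-b*q)^k =
    (-c+d+a*p+b*q)^k + (-c+d-a*p-b*q)^k + (-2*c-b*p+a*q)^k + (-2*c+b*p-a*q)^k +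
      (-c-d-a*p-b*q)^k + (-c-d+a*p+b*q)^k := by
  intro k hk
  rcases hk with rfl | rfl | rfl | rfl
  · ring
  · ring
  · linear_combination (32*a*b*c*p*q) * h1 + (-32*a*b*c*p*q) * h2
  · linear_combination (-224*a*b*c*d^2*p*q + 336*a*b*c^3*p*q + (224/15)*a*b^3*c*p*q^3
      + (4144/15)*a*b^3*c*p^3*q + (4144/15)*a^3*b*c*p*q^3 + (224/15)*a^3*b*c*p^3*q) * h1
      + (-112*a*b*c*d^2*p*q - (4144/15)*a*b^3*c*p*q^3 - (224/15)*a*b^3*c*p^3*q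
      - (224/15)*a^3*b*c*p*q^3 - (4144/15)*a^3*b*c*p^3*q) * h2
end
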